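/- Let n ≥ 1 be an integer, let 0 < β < 3 − 2√2, set Δ = (1 − β)² − 4β, y₁ = (1 − β + √Δ)/(2β), y₂ = (1 − β − √Δ)/(2β), t₁ = n − y₁ and t₂ = n − y₂, and define ξ(t) = e^{−βt}·g(max(1, n − t)). If t₁ < 0 and 0 ≤ t₂ < n − 1, then sup_{k ∈ ℕ} e^{−βk}·g(max(1, n − k)) = max( e^{−β⌊t₂⌋}·g(n − ⌊t₂⌋), e^{−β⌈t₂⌉}·g(n − ⌈t₂⌉) ). -/

import Mathlib

/-- Local sensitivity of the Gini impurity as a function of the support size. -/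
noncomputable def g (x : ℝ) : ℝ := 1 - (x / (x + 1))^2 - (1 / (x + 1))^2

/-!
With `y = n - t`, the derivative of `e^{-βt} g(n - t) = e^{-βt} · 2y / (y + 1)²` is
`-2 e^{-βt} (βy² - (1 - β)y + 1) / (y + 1)³`, and the quadratic has the roots `y₂ < y₁`.
As `t₁ < 0` means `y₁ > n`, the profile `ξ` increases on `[0, t₂]` and decreases on `[t₂, n - 1]`;
past `n - 1` it is `e^{-βt} / 2`, again decreasing. So the terms `ξ(k)` are unimodal with their
peak at `⌊t₂⌋` or `⌈t₂⌉`.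
-/

open Real Set

lemma g_eq_div {x : ℝ} (hx : x + 1 ≠ 0) : g x = 2 * x / (x + 1) ^ 2 := by
  unfold g
  field_simp
  ring

lemma g_one : g 1 = 1 / 2 := by
  norm_num [g]

lemma hasDerivAt_g {x : ℝ} (hx : x + 1 ≠ 0) : HasDerivAt g (2 * (1 - x) / (x + 1) ^ 3) x := by
  have hsucc : HasDerivAt (fun y : ℝ => y + 1) 1 x := (hasDerivAt_id x).add_const 1
  have hdiv := ((hasDerivAt_id' x).const_mul 2).div (hsucc.fun_pow 2) (pow_ne_zero 2 hx)
  refine (hdiv.congr_of_eventuallyEq ?_).congr_deriv ?_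
  · exact (hsucc.continuousAt.eventually_ne hx).mono fun y hy => g_eq_div hy
  · field_simp
    ring

def profileQuadratic (β y : ℝ) : ℝ := β * y ^ 2 - (1 - β) * y + 1

lemma profileQuadratic_eq_mul {β s : ℝ} (hβ : β ≠ 0) (hs : s ^ 2 = (1 - β) ^ 2 - 4 * β) (y : ℝ) :
    profileQuadratic β y =
      β * (y - (1 - β + s) / (2 * β)) * (y - (1 - β - s) / (2 * β)) := by
  unfold profileQuadratic
  field_simp
  linear_combination hs

lemma hasDerivAt_exp_mul_g_sub (β c t : ℝ) (ht : c - t + 1 ≠ 0) :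
    HasDerivAt (fun s => exp (-β * s) * g (c - s))
      (-2 * exp (-β * t) * profileQuadratic β (c - t) / (c - t + 1) ^ 3) t := by
  have hexp : HasDerivAt (fun s => exp (-β * s)) (exp (-β * t) * -β) t := by
    simpa using ((hasDerivAt_id t).const_mul (-β)).exp
  have hg : HasDerivAt (fun s => g (c - s)) (2 * (1 - (c - t)) / (c - t + 1) ^ 3 * -1) t :=
    (hasDerivAt_g ht).comp t ((hasDerivAt_id t).const_sub c)
  refine (hexp.mul hg).congr_deriv ?_
  rw [g_eq_div ht, profileQuadratic]
  field_simp
  ring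

section ExpMulGSub

variable {β c : ℝ} {D : Set ℝ}

lemma monotoneOn_exp_mul_g_sub (hD : Convex ℝ D) (hpos : ∀ t ∈ D, 0 < c - t + 1)
    (hq : ∀ t ∈ D, profileQuadratic β (c - t) ≤ 0) :
    MonotoneOn (fun s => exp (-β * s) * g (c - s)) D := by
  have hderiv t (ht : t ∈ D) := hasDerivAt_exp_mul_g_sub β c t (hpos t ht).ne'
  refine monotoneOn_of_hasDerivWithinAt_nonneg hD
    (fun t ht => (hderiv t ht).continuousAt.continuousWithinAt)
    (fun t ht => (hderiv t (interior_subset ht)).hasDerivWithinAt) fun t ht => ?_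
  have ht := interior_subset ht
  have hexp := exp_pos (-β * t)
  exact div_nonneg (mul_nonneg_of_nonpos_of_nonpos (by linarith) (hq t ht))
    (pow_pos (hpos t ht) 3).le

lemma antitoneOn_exp_mul_g_sub (hD : Convex ℝ D) (hpos : ∀ t ∈ D, 0 < c - t + 1)
    (hq : ∀ t ∈ D, 0 ≤ profileQuadratic β (c - t)) :
    AntitoneOn (fun s => exp (-β * s) * g (c - s)) D := by
  have hderiv t (ht : t ∈ D) := hasDerivAt_exp_mul_g_sub β c t (hpos t ht).ne'
  refine antitoneOn_of_hasDerivWithinAt_nonpos hD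
    (fun t ht => (hderiv t ht).continuousAt.continuousWithinAt)
    (fun t ht => (hderiv t (interior_subset ht)).hasDerivWithinAt) fun t ht => ?_
  have ht := interior_subset ht
  have hexp := exp_pos (-β * t)
  exact div_nonpos_of_nonpos_of_nonneg (mul_nonpos_of_nonpos_of_nonneg (by linarith) (hq t ht))
    (pow_pos (hpos t ht) 3).le

end ExpMulGSub

/-- The function `ξ` of the paper, with `c = n`. -/
noncomputable def smoothProfile (β c t : ℝ) : ℝ := exp (-β * t) * g (max 1 (c - t))

section SmoothProfile

variable {β c t : ℝ}

lemma smoothProfile_of_le (ht : t ≤ c - 1) : smoothProfile β c t = exp (-β * t) * g (c - t) := by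
  rw [smoothProfile, max_eq_right (by linarith)]

lemma smoothProfile_of_ge (ht : c - 1 ≤ t) : smoothProfile β c t = exp (-β * t) / 2 := by
  rw [smoothProfile, max_eq_left (by linarith), g_one, mul_one_div]

lemma antitoneOn_smoothProfile_Ici_sub_one (hβ : 0 ≤ β) :
    AntitoneOn (smoothProfile β c) (Ici (c - 1)) := by
  intro s hs t ht hst
  rw [smoothProfile_of_ge hs, smoothProfile_of_ge ht]
  gcongr ?_ / 2
  exact exp_le_exp.mpr (by nlinarith)

variable {y₁ y₂ : ℝ}

lemma monotoneOn_smoothProfile (hβ : 0 < β)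
    (hfac : ∀ y, profileQuadratic β y = β * (y - y₁) * (y - y₂)) (hy₂ : 1 ≤ y₂) (hc : c ≤ y₁) :
    MonotoneOn (smoothProfile β c) (Icc 0 (c - y₂)) := by
  refine (monotoneOn_exp_mul_g_sub (convex_Icc _ _) (fun t ht => by linarith [ht.2])
    fun t ht => ?_).congr fun t ht => (smoothProfile_of_le (by linarith [ht.2])).symm
  rw [hfac]
  exact mul_nonpos_of_nonpos_of_nonneg
    (mul_nonpos_of_nonneg_of_nonpos hβ.le (by linarith [ht.1])) (by linarith [ht.2])

lemma antitoneOn_smoothProfile (hβ : 0 < β)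
    (hfac : ∀ y, profileQuadratic β y = β * (y - y₁) * (y - y₂)) (hy₂ : 1 ≤ y₂) (hy : y₂ ≤ y₁) :
    AntitoneOn (smoothProfile β c) (Ici (c - y₂)) := by
  have hleft : AntitoneOn (smoothProfile β c) (Icc (c - y₂) (c - 1)) := by
    refine (antitoneOn_exp_mul_g_sub (convex_Icc _ _) (fun t ht => by linarith [ht.2])
      fun t ht => ?_).congr fun t ht => (smoothProfile_of_le ht.2).symm
    rw [hfac]
    exact mul_nonneg_of_nonpos_of_nonpos
      (mul_nonpos_of_nonneg_of_nonpos hβ.le (by linarith [ht.1])) (by linarith [ht.1])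
  rw [← Icc_union_Ici_eq_Ici (by linarith : c - y₂ ≤ c - 1)]
  exact hleft.union_right (antitoneOn_smoothProfile_Ici_sub_one hβ.le)
    (isGreatest_Icc (by linarith)) isLeast_Ici

end SmoothProfile

section UnimodalSupremum

variable {f : ℝ → ℝ} {t : ℝ}

lemma iSup_nat_eq_max_natFloor_natCeil (hmono : MonotoneOn f (Icc 0 t))
    (hanti : AntitoneOn f (Ici t)) : ⨆ k : ℕ, f k = max (f ⌊t⌋₊) (f ⌈t⌉₊) := by
  have hle (k : ℕ) : f k ≤ max (f ⌊t⌋₊) (f ⌈t⌉₊) := by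
    rcases le_or_gt (k : ℝ) t with hkt | htk
    · have ht : 0 ≤ t := k.cast_nonneg.trans hkt
      exact le_max_of_le_left <| hmono ⟨k.cast_nonneg, hkt⟩ ⟨by positivity, Nat.floor_le ht⟩
        (Nat.cast_le.mpr (Nat.le_floor hkt))
    · exact le_max_of_le_right <| hanti (Nat.le_ceil t) htk.le
        (Nat.cast_le.mpr (Nat.ceil_le.mpr htk.le))
  have hbdd : BddAbove (range fun k : ℕ => f k) := ⟨_, forall_mem_range.mpr hle⟩
  exact le_antisymm (ciSup_le hle) (max_le (le_ciSup hbdd _) (le_ciSup hbdd _))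

lemma iSup_nat_eq_max_floor_ceil (ht : 0 ≤ t) (hmono : MonotoneOn f (Icc 0 t))
    (hanti : AntitoneOn f (Ici t)) : ⨆ k : ℕ, f k = max (f ⌊t⌋) (f ⌈t⌉) := by
  rw [iSup_nat_eq_max_natFloor_natCeil hmono hanti, natCast_floor_eq_intCast_floor ht,
    natCast_ceil_eq_intCast_ceil ht]

end UnimodalSupremum

theorem smooth_sensitivity_small_beta_t1_neg_general (n : ℤ) (β : ℝ)
    (hβ0 : 0 < β)
    (Δ y₁ y₂ t₁ t₂ : ℝ)
    (hΔ : Δ = (1 - β)^2 - 4 * β)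
    (hy₁ : y₁ = (1 - β + Real.sqrt Δ) / (2 * β))
    (hy₂ : y₂ = (1 - β - Real.sqrt Δ) / (2 * β))
    (ht₁ : t₁ = (n : ℝ) - y₁) (ht₂ : t₂ = (n : ℝ) - y₂)
    (ht₁neg : t₁ < 0) (ht₂0 : 0 ≤ t₂) (ht₂lt : t₂ < (n : ℝ) - 1) :
    (⨆ k : ℕ, Real.exp (-β * (k : ℝ)) * g (max (1 : ℝ) ((n : ℝ) - (k : ℝ)))) =
      max (Real.exp (-β * (⌊t₂⌋ : ℝ)) * g ((n : ℝ) - (⌊t₂⌋ : ℝ)))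
          (Real.exp (-β * (⌈t₂⌉ : ℝ)) * g ((n : ℝ) - (⌈t₂⌉ : ℝ))) := by
  subst ht₁ ht₂
  have hy : y₂ < y₁ := by linarith
  -- `y₂ < y₁` rules out `Δ < 0`, where `√Δ = 0` would make the two roots coincide.
  have hsqrt : √Δ ^ 2 = Δ := by
    have : 0 < √Δ := by
      rw [hy₁, hy₂, div_lt_div_iff_of_pos_right (by linarith)] at hy
      linarith
    exact sq_sqrt (sqrt_pos.mp this).le
  have hfac (y : ℝ) : profileQuadratic β y = β * (y - y₁) * (y - y₂) := by
    rw [hy₁, hy₂]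
    exact profileQuadratic_eq_mul hβ0.ne' (hsqrt.trans hΔ) y
  have hy₂_ge : 1 ≤ y₂ := by linarith
  have hceil : (⌈(n : ℝ) - y₂⌉ : ℝ) ≤ n - 1 := by
    exact_mod_cast Int.ceil_le.mpr (by push_cast; linarith)
  have hsup := iSup_nat_eq_max_floor_ceil ht₂0
    (monotoneOn_smoothProfile hβ0 hfac hy₂_ge (by linarith))
    (antitoneOn_smoothProfile hβ0 hfac hy₂_ge hy.le)
  rwa [smoothProfile_of_le ((Int.cast_le.mpr (Int.floor_le_ceil _)).trans hceil),
    smoothProfile_of_le hceil] at hsup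

theorem smooth_sensitivity_small_beta_t1_neg (n : ℤ) (hn : 1 ≤ n) (β : ℝ)
    (hβ0 : 0 < β) (hβ1 : β < 3 - 2 * Real.sqrt 2)
    (Δ y₁ y₂ t₁ t₂ : ℝ)
    (hΔ : Δ = (1 - β)^2 - 4 * β)
    (hy₁ : y₁ = (1 - β + Real.sqrt Δ) / (2 * β))
    (hy₂ : y₂ = (1 - β - Real.sqrt Δ) / (2 * β))
    (ht₁ : t₁ = (n : ℝ) - y₁) (ht₂ : t₂ = (n : ℝ) - y₂)
    (ht₁neg : t₁ < 0) (ht₂0 : 0 ≤ t₂) (ht₂lt : t₂ < (n : ℝ) - 1) :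
    (⨆ k : ℕ, Real.exp (-β * (k : ℝ)) * g (max (1 : ℝ) ((n : ℝ) - (k : ℝ)))) =
      max (Real.exp (-β * (⌊t₂⌋ : ℝ)) * g ((n : ℝ) - (⌊t₂⌋ : ℝ)))
          (Real.exp (-β * (⌈t₂⌉ : ℝ)) * g ((n : ℝ) - (⌈t₂⌉ : ℝ))) :=
  smooth_sensitivity_small_beta_t1_neg_general n β hβ0 Δ y₁ y₂ t₁ t₂ hΔ hy₁ hy₂ ht₁ ht₂ ht₁neg ht₂0
    ht₂lt
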